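/- arXiv:1602.09052 — 2 statements merged into one kernel-verified Lean document; each statement's English description precedes it below -/
import Mathlib

section
/- Let f : ℕ → ℕ and let G be a finite graph admitting a connected f-flat decomposition of width k. Then for every r ∈ ℕ, wcol_r(G) ≤ C(r+k, k)·f(r). -/
open SimpleGraph

variable {V : Type} [Fintype V]

/-- The vertex sets `H 0, …, H (ℓ-1)` form a partition of `V`. -/
def IsDecomp {ℓ : ℕ} (H : Fin ℓ → Set V) : Prop :=
  (∀ i, (H i).Nonempty) ∧ (∀ i j, i ≠ j → Disjoint (H i) (H j)) ∧ (∀ v : V, ∃ i, v ∈ H i)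

/-- The union of the parts strictly before `i`. -/
def before {ℓ : ℕ} (H : Fin ℓ → Set V) (i : Fin ℓ) : Set V :=
  {v | ∃ j, j < i ∧ v ∈ H j}

/-- `C` is a (connected) component of `G − U`. -/
def IsCompOf (G : SimpleGraph V) (U C : Set V) : Prop :=
  C.Nonempty ∧ Disjoint C U ∧ (G.induce C).Connected ∧
    ∀ u ∈ C, ∀ v : V, v ∉ U → G.Adj u v → v ∈ C

/-- There is an edge of `G` between `A` and `C`. -/
def LinkedTo (G : SimpleGraph V) (A C : Set V) : Prop :=
  ∃ u ∈ A, ∃ v ∈ C, G.Adj u v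

/-- The decomposition has width at most `k`: for every `i` and every component
`C` of `G` minus the parts before `i`, at most `k` of the earlier parts have an
edge to `C`. -/
def WidthLE (G : SimpleGraph V) {ℓ : ℕ} (H : Fin ℓ → Set V) (k : ℕ) : Prop :=
  ∀ i : Fin ℓ, ∀ C : Set V, IsCompOf G (before H i) C →
    {j : Fin ℓ | j < i ∧ LinkedTo G (H j) C}.ncard ≤ k

/-- The decomposition is `f`-flat: each part `H i` `f`-spreads on the graph
obtained by deleting the earlier parts, i.e. for every `r` and every vertex `v`
outside the earlier parts, at most `f r` vertices of `H i` are reachable from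
`v` by a walk of length at most `r` avoiding the earlier parts. -/
def IsFlat (G : SimpleGraph V) {ℓ : ℕ} (H : Fin ℓ → Set V) (f : ℕ → ℕ) : Prop :=
  ∀ i : Fin ℓ, ∀ r : ℕ, ∀ v : V, v ∉ before H i →
    {u | u ∈ H i ∧ ∃ p : G.Walk v u, p.length ≤ r ∧
      ∀ w ∈ p.support, w ∉ before H i}.ncard ≤ f r

/-- Every part induces a connected subgraph. -/
def IsConnectedDecomp (G : SimpleGraph V) {ℓ : ℕ} (H : Fin ℓ → Set V) : Prop :=
  ∀ i, (G.induce (H i)).Connected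

/-- `P` is the vertex set of an isometric path of `G` inside `S`: a path whose
support lies in `S` and which is a shortest among all walks in `S` between its
endpoints. -/
def IsIsomPathIn (G : SimpleGraph V) (S P : Set V) : Prop :=
  ∃ (x y : V) (p : G.Walk x y), p.IsPath ∧ (∀ w ∈ p.support, w ∈ S) ∧
    P = {w | w ∈ p.support} ∧
    ∀ q : G.Walk x y, (∀ w ∈ q.support, w ∈ S) → p.length ≤ q.length

/-- The set of vertices weakly `r`-reachable from `v` with respect to `L`. -/
def WReach (G : SimpleGraph V) (L : LinearOrder V) (r : ℕ) (v : V) : Set V :=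
  {u | ∃ p : G.Walk v u, p.IsPath ∧ p.length ≤ r ∧ ∀ w ∈ p.support, L.le u w}

/-- The weak `r`-colouring number. -/
noncomputable def wcol (G : SimpleGraph V) (r : ℕ) : ℕ :=
  sInf {k | ∃ L : LinearOrder V, ∀ v, (WReach G L r v).ncard ≤ k}

/-! Order the vertices by the index of their part. If `u` is weakly `r`-reachable from `v`, follow
the witnessing path and keep track of the smallest part index `m` seen so far. When the path steps
into a part `j < m`, that part has an edge to the component of `v` in `G` minus the parts before
`m`. Hence the part of `u` is reached from the part of `v` by at most `r` steps `t ↦ N t`, where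
`N t` is the set of earlier parts linked to the component of `v` in `G` minus the parts before `t`.
By the width bound `|N t| ≤ k`. Also the earlier members of `N t` lie in `N` of its later ones,
exactly like the back-neighbourhoods in a perfect elimination ordering of a chordal graph of clique
number `k + 1`, and such a system reaches at most `C(r+k, k)` points in `r` steps. Flatness then
bounds each part reached by `f r` vertices. -/

open Finset

lemma one_add_sum_choose_le {A : Finset ℕ} {b c : ℕ} (hA : A ⊆ Icc 1 c) :
    1 + ∑ m ∈ A, (b + m).choose m ≤ (b + 1 + c).choose c := by
  have h0 : 0 ∉ A := fun h => by simpa using hA h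
  calc 1 + ∑ m ∈ A, (b + m).choose m = ∑ m ∈ insert 0 A, (b + m).choose m := by
        simp [sum_insert h0]
    _ ≤ ∑ m ∈ range (c + 1), (b + m).choose m := by
        refine sum_le_sum_of_subset (insert_subset (by simp) fun m hm => ?_)
        simpa [Nat.lt_succ_iff] using (mem_Icc.mp (hA hm)).2
    _ = ∑ m ∈ range (c + 1), (m + b).choose b := by
        simp_rw [add_comm b, Nat.choose_symm_add]
    _ = (b + 1 + c).choose c := by
        rw [Nat.sum_range_add_choose, Nat.choose_symm_of_eq_add (by ring)]
        ring_nf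

lemma exists_max_notMem_Icc {A : Finset ℕ} {k : ℕ} (hA : #A < k) :
    ∃ c ∈ Icc 1 k, c ∉ A ∧ ∀ m ∈ Icc 1 k, m ∉ A → m ≤ c := by
  have hne : (Icc 1 k \ A).Nonempty := by
    rw [← card_pos]
    have := le_card_sdiff A (Icc 1 k)
    simp only [Nat.card_Icc, add_tsub_cancel_right] at this
    omega
  obtain ⟨hc, hcA⟩ := mem_sdiff.mp ((Icc 1 k \ A).max'_mem hne)
  exact ⟨_, hc, hcA, fun m hm hmA => le_max' _ m (mem_sdiff.mpr ⟨hm, hmA⟩)⟩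

section BackReach

variable {ι : Type*} [LinearOrder ι] (N : ι → Finset ι)

def backReach : ℕ → ι → Finset ι
  | 0, t => {t}
  | ρ + 1, t => insert t ((N t).biUnion (backReach ρ))

def IsBackClique (X : Finset ι) : Prop :=
  ∀ x ∈ X, ∀ y ∈ X, x < y → x ∈ N y

variable {N}

lemma backReach_succ (ρ : ℕ) (t : ι) :
    backReach N (ρ + 1) t = insert t ((N t).biUnion (backReach N ρ)) := rfl

lemma self_mem_backReach (ρ : ℕ) (t : ι) : t ∈ backReach N ρ t := by
  cases ρ <;> simp [backReach]

lemma backReach_mono : Monotone (backReach N) := by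
  refine monotone_nat_of_le_succ fun ρ => ?_
  induction ρ with
  | zero => intro t; simp [backReach]
  | succ ρ ih => exact fun t => insert_subset_insert _ (biUnion_mono fun s _ => ih s)

lemma backReach_subset_succ_of_mem {s t : ι} (ρ : ℕ) (h : s ∈ N t) :
    backReach N ρ s ⊆ backReach N (ρ + 1) t :=
  fun _ hx => mem_insert_of_mem (mem_biUnion.mpr ⟨s, h, hx⟩)

lemma le_of_mem_backReach (hlt : ∀ t, ∀ s ∈ N t, s < t) :
    ∀ {ρ : ℕ} {t u : ι}, u ∈ backReach N ρ t → u ≤ t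
  | 0, t, u, hu => (mem_singleton.mp hu).le
  | ρ + 1, t, u, hu => by
    rcases mem_insert.mp hu with rfl | hu
    · rfl
    · obtain ⟨s, hs, hu⟩ := mem_biUnion.mp hu
      exact (le_of_mem_backReach hlt hu).trans (hlt t s hs).le

lemma union_backReach_subset {s : ι} {X : Finset ι} {β : ι → ℕ} {b : ℕ}
    (hX : ∀ x ∈ X, x ∈ N s) :
    backReach N (b + 1) s ∪ X.biUnion (fun x => backReach N (β x) x) ⊆
      insert s ((N s).biUnion fun y =>
        backReach N (if y ∈ X ∧ b < β y then β y else b) y) := by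
  intro z hz
  rcases mem_union.mp hz with hz | hz
  · rcases mem_insert.mp hz with rfl | hz
    · exact mem_insert_self _ _
    obtain ⟨y, hy, hz⟩ := mem_biUnion.mp hz
    refine mem_insert_of_mem (mem_biUnion.mpr ⟨y, hy, backReach_mono ?_ y hz⟩)
    split_ifs <;> omega
  · obtain ⟨x, hx, hz⟩ := mem_biUnion.mp hz
    refine mem_insert_of_mem (mem_biUnion.mpr ⟨x, hX x hx, backReach_mono ?_ x hz⟩)
    split_ifs with h
    · rfl
    · exact not_lt.mp fun hbx => h ⟨hx, hbx⟩

lemma IsBackClique.subset {X Y : Finset ι} (hX : IsBackClique N X) (hYX : Y ⊆ X) :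
    IsBackClique N Y :=
  fun x hx y hy => hX x (hYX hx) y (hYX hy)

end BackReach

section BinomialBound

variable {ι : Type*} {k n : ℕ} {β : ι → ℕ}

/-- The invariant of the count. The exponents are distinct so that, by the hockey-stick identity,
a new top element with budget `b + 1` can absorb all terms of budget `b` below it into the single
term `C(b + 1 + c, c)`. -/
def HasBinomialBound (k : ℕ) (β : ι → ℕ) (X : Finset ι) (n : ℕ) : Prop :=
  ∃ P ⊆ X, ∃ e : ι → ℕ, Set.InjOn e P ∧ (∀ x ∈ P, e x ∈ Icc 1 k) ∧
    n ≤ ∑ x ∈ P, (β x + e x).choose (e x)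

lemma HasBinomialBound.mono {X : Finset ι} {m : ℕ} (h : HasBinomialBound k β X n)
    (hmn : m ≤ n) : HasBinomialBound k β X m :=
  let ⟨P, hP, e, he, hek, hn⟩ := h
  ⟨P, hP, e, he, hek, hmn.trans hn⟩

lemma hasBinomialBound_empty (β : ι → ℕ) : HasBinomialBound k β ∅ 0 :=
  ⟨∅, subset_rfl, fun _ => 0, by simp, by simp, by simp⟩

lemma hasBinomialBound_insert [DecidableEq ι] {s : ι} {X P : Finset ι} {e : ι → ℕ} {c : ℕ}
    (hs : s ∉ X) (hPX : P ⊆ X) (he : Set.InjOn e P) (hek : ∀ x ∈ P, e x ∈ Icc 1 k)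
    (hc : c ∈ Icc 1 k) (hcP : c ∉ P.image e)
    (hn : n ≤ (β s + c).choose c + ∑ x ∈ P, (β x + e x).choose (e x)) :
    HasBinomialBound k β (insert s X) n := by
  have hsP : s ∉ P := fun h => hs (hPX h)
  have heq : Set.EqOn (Function.update e s c) e P := fun x hx =>
    Function.update_of_ne (ne_of_mem_of_not_mem hx hsP) _ _
  refine ⟨insert s P, insert_subset_insert _ hPX, Function.update e s c, ?_, ?_, ?_⟩
  · rw [coe_insert, Set.injOn_insert (by simpa using hsP), heq.image_eq]
    exact ⟨he.congr heq.symm, by simpa using hcP⟩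
  · intro x hx
    rcases mem_insert.mp hx with rfl | hx
    · simpa using hc
    · rw [heq hx]; exact hek x hx
  · rw [sum_insert hsP, Function.update_self, sum_congr rfl fun x hx => by rw [heq hx]]
    exact hn

lemma HasBinomialBound.insert_of_zero [DecidableEq ι] {s : ι} {X : Finset ι} (hs : s ∉ X)
    (hX : #X < k) (hβ : β s = 0) (h : HasBinomialBound k β X n) :
    HasBinomialBound k β (insert s X) (n + 1) := by
  obtain ⟨P, hPX, e, he, hek, hn⟩ := h
  obtain ⟨c, hc, hcP, -⟩ :=
    exists_max_notMem_Icc (card_image_le.trans_lt ((card_le_card hPX).trans_lt hX))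
  refine hasBinomialBound_insert hs hPX he hek hc hcP ?_
  rw [hβ, zero_add, Nat.choose_self]
  omega

lemma HasBinomialBound.insert_of_succ [DecidableEq ι] {s : ι} {X Y : Finset ι} {b : ℕ}
    (hs : s ∉ X) (hX : #X < k) (hβ : β s = b + 1)
    (h : HasBinomialBound k (fun y => if y ∈ X ∧ b < β y then β y else b) Y n) :
    HasBinomialBound k β (insert s X) (n + 1) := by
  obtain ⟨P, -, e, he, hek, hn⟩ := h
  have hQX : P.filter (fun y => y ∈ X ∧ b < β y) ⊆ X := fun y hy => (mem_filter.mp hy).2.1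
  -- `c` is the largest exponent not used by the kept terms, so it dominates the dropped ones.
  obtain ⟨c, hc, hcQ, hcmax⟩ :=
    exists_max_notMem_Icc (card_image_le.trans_lt ((card_le_card hQX).trans_lt hX))
  refine hasBinomialBound_insert hs hQX (he.mono (filter_subset _ _))
    (fun x hx => hek x (filter_subset _ _ hx)) hc hcQ ?_
  have hsplit : ∑ y ∈ P, ((if y ∈ X ∧ b < β y then β y else b) + e y).choose (e y) =
      ∑ y ∈ P with y ∈ X ∧ b < β y, (β y + e y).choose (e y) +
        ∑ y ∈ P with ¬(y ∈ X ∧ b < β y), (b + e y).choose (e y) := by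
    rw [← sum_ite]
    exact sum_congr rfl fun y _ => by split_ifs <;> rfl
  have hlow : 1 + ∑ y ∈ P with ¬(y ∈ X ∧ b < β y), (b + e y).choose (e y) ≤
      (b + 1 + c).choose c := by
    rw [← sum_image (f := fun m => (b + m).choose m) (he.mono (filter_subset _ _))]
    refine one_add_sum_choose_le fun m hm => ?_
    obtain ⟨y, hy, rfl⟩ := mem_image.mp hm
    obtain ⟨hyP, hyQ⟩ := mem_filter.mp hy
    refine mem_Icc.mpr ⟨(mem_Icc.mp (hek y hyP)).1, hcmax _ (hek y hyP) fun hmem => ?_⟩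
    obtain ⟨z, hz, hzy⟩ := mem_image.mp hmem
    exact hyQ ((he (filter_subset _ _ hz) hyP hzy) ▸ (mem_filter.mp hz).2)
  beta_reduce at hn
  rw [hsplit] at hn
  rw [hβ]
  omega

end BinomialBound

section BackReachCard

variable {ι : Type*} [LinearOrder ι] [WellFoundedLT ι] {N : ι → Finset ι} {k : ℕ}

theorem hasBinomialBound_backReach (hlt : ∀ t, ∀ s ∈ N t, s < t)
    (hclique : ∀ t, IsBackClique N (N t)) (hcard : ∀ t, #(N t) ≤ k) {a : ι} {X : Finset ι}
    (hXa : ∀ x ∈ X, x < a) (hX : IsBackClique N X) (hXk : #X ≤ k) (β : ι → ℕ) :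
    HasBinomialBound k β X #(X.biUnion fun x => backReach N (β x) x) := by
  induction a using WellFoundedLT.induction generalizing X β with
  | _ a ih =>
  rcases X.eq_empty_or_nonempty with rfl | hne
  · simpa using hasBinomialBound_empty β
  set s := X.max' hne
  set X' := X.erase s
  have hsX : s ∈ X := max'_mem _ _
  have hX's : ∀ x ∈ X', x < s := fun x hx =>
    lt_of_le_of_ne (le_max' _ _ (mem_of_mem_erase hx)) (ne_of_mem_erase hx)
  have hX'k : #X' < k := by
    have : #X' + 1 = #X := card_erase_add_one hsX
    omega
  rw [show X = insert s X' from (insert_erase hsX).symm, biUnion_insert]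
  rcases hb : β s with _ | b
  · refine ((ih s (hXa s hsX) hX's (hX.subset (erase_subset s X)) hX'k.le β).insert_of_zero
      (notMem_erase s X) hX'k hb).mono ?_
    exact (card_union_le _ _).trans_eq (by simp [backReach, add_comm])
  · refine ((ih s (hXa s hsX) (hlt s) (hclique s) (hcard s) _).insert_of_succ
      (notMem_erase s X) hX'k hb).mono ?_
    have hX'N : ∀ x ∈ X', x ∈ N s := fun x hx => hX x (mem_of_mem_erase hx) s hsX (hX's x hx)
    exact (card_le_card (union_backReach_subset hX'N)).trans (card_insert_le _ _)

theorem card_backReach_le (hlt : ∀ t, ∀ s ∈ N t, s < t)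
    (hclique : ∀ t, IsBackClique N (N t)) (hcard : ∀ t, #(N t) ≤ k) :
    ∀ (ρ : ℕ) (t : ι), #(backReach N ρ t) ≤ (ρ + k).choose k
  | 0, t => by simp [backReach]
  | ρ + 1, t => by
    obtain ⟨P, -, e, he, hek, hn⟩ :=
      hasBinomialBound_backReach hlt hclique hcard (hlt t) (hclique t) (hcard t) fun _ => ρ
    calc #(backReach N (ρ + 1) t) ≤ 1 + #((N t).biUnion (backReach N ρ)) := by
          rw [backReach_succ, add_comm]
          exact card_insert_le _ _
      _ ≤ 1 + ∑ m ∈ P.image e, (ρ + m).choose m := by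
          rw [sum_image he]
          exact Nat.add_le_add_left hn 1
      _ ≤ (ρ + 1 + k).choose k := one_add_sum_choose_le (image_subset_iff.mpr hek)

end BackReachCard

section ReachAvoiding

variable {α : Type} {G : SimpleGraph α} {U U' : Set α} {v w x : α}

def reachAvoiding (G : SimpleGraph α) (U : Set α) (v : α) : Set α :=
  {w | ∃ p : G.Walk v w, ∀ x ∈ p.support, x ∉ U}

lemma mem_reachAvoiding_self (hv : v ∉ U) : v ∈ reachAvoiding G U v :=
  ⟨Walk.nil, by simpa using hv⟩

lemma notMem_of_mem_reachAvoiding (hw : w ∈ reachAvoiding G U v) : w ∉ U :=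
  let ⟨p, hp⟩ := hw
  hp w p.end_mem_support

lemma reachAvoiding_eq_empty (hv : v ∈ U) : reachAvoiding G U v = ∅ :=
  Set.eq_empty_of_forall_notMem fun _ ⟨p, hp⟩ => hp v p.start_mem_support hv

lemma mem_reachAvoiding_of_adj (hw : w ∈ reachAvoiding G U v) (hx : x ∉ U) (hadj : G.Adj w x) :
    x ∈ reachAvoiding G U v := by
  obtain ⟨p, hp⟩ := hw
  refine ⟨p.concat hadj, fun y hy => ?_⟩
  rw [Walk.support_concat, List.mem_append, List.mem_singleton] at hy
  rcases hy with hy | rfl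
  exacts [hp y hy, hx]

lemma reachAvoiding_anti (h : U ⊆ U') : reachAvoiding G U' v ⊆ reachAvoiding G U v :=
  fun _ ⟨p, hp⟩ => ⟨p, fun x hx hxU => hp x hx (h hxU)⟩

lemma support_subset_reachAvoiding (p : G.Walk v w) (hp : ∀ x ∈ p.support, x ∉ U) :
    {x | x ∈ p.support} ⊆ reachAvoiding G U v := by
  classical
  exact fun x hx =>
    ⟨p.takeUntil x hx, fun y hy => hp y (p.support_takeUntil_subset_support hx hy)⟩

lemma isCompOf_reachAvoiding (hv : v ∉ U) :
    IsCompOf G U (reachAvoiding G U v) := by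
  refine ⟨⟨v, mem_reachAvoiding_self hv⟩,
    Set.disjoint_left.mpr fun _ => notMem_of_mem_reachAvoiding, ?_,
    fun _ hu _ hx => mem_reachAvoiding_of_adj hu hx⟩
  refine G.induce_connected_of_patches v (mem_reachAvoiding_self hv) fun {w} hw => ?_
  obtain ⟨p, hp⟩ := hw
  exact ⟨_, support_subset_reachAvoiding p hp, p.start_mem_support, p.end_mem_support,
    p.connected_induce_support _ _⟩

end ReachAvoiding

section Parts

variable {α : Type} {G : SimpleGraph α} {ℓ k : ℕ} {H : Fin ℓ → Set α}

noncomputable def partIdx (hdec : IsDecomp H) (v : α) : Fin ℓ := (hdec.2.2 v).choose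

lemma mem_partIdx (hdec : IsDecomp H) (v : α) : v ∈ H (partIdx hdec v) :=
  (hdec.2.2 v).choose_spec

lemma partIdx_eq (hdec : IsDecomp H) {v : α} {i : Fin ℓ} (h : v ∈ H i) : partIdx hdec v = i :=
  by_contra fun hne => Set.disjoint_left.mp (hdec.2.1 _ _ hne) (mem_partIdx hdec v) h

lemma mem_before_iff (hdec : IsDecomp H) {v : α} {i : Fin ℓ} :
    v ∈ before H i ↔ partIdx hdec v < i :=
  ⟨fun ⟨_, hj, hv⟩ => partIdx_eq hdec hv ▸ hj, fun h => ⟨_, h, mem_partIdx hdec v⟩⟩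

lemma before_mono {i j : Fin ℓ} (h : i ≤ j) : before H i ⊆ before H j :=
  fun _ ⟨m, hm, hv⟩ => ⟨m, hm.trans_le h, hv⟩

open Classical in
noncomputable def linkedParts (G : SimpleGraph α) (H : Fin ℓ → Set α) (v : α) (t : Fin ℓ) :
    Finset (Fin ℓ) :=
  Finset.univ.filter fun j => j < t ∧ LinkedTo G (H j) (reachAvoiding G (before H t) v)

lemma mem_linkedParts {v : α} {j t : Fin ℓ} :
    j ∈ linkedParts G H v t ↔ j < t ∧ LinkedTo G (H j) (reachAvoiding G (before H t) v) := by
  simp [linkedParts]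

lemma lt_of_mem_linkedParts {v : α} {s t : Fin ℓ} (h : s ∈ linkedParts G H v t) : s < t :=
  (mem_linkedParts.mp h).1

lemma card_linkedParts_le (hw : WidthLE G H k) (v : α) (t : Fin ℓ) :
    #(linkedParts G H v t) ≤ k := by
  by_cases hv : v ∈ before H t
  · suffices linkedParts G H v t = ∅ by simp [this]
    ext j
    simp [mem_linkedParts, LinkedTo, reachAvoiding_eq_empty hv]
  · convert hw t _ (isCompOf_reachAvoiding hv)
    rw [← Set.ncard_coe_finset]
    congr
    ext j
    simp [mem_linkedParts]

lemma isBackClique_linkedParts (v : α) (t : Fin ℓ) :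
    IsBackClique (linkedParts G H v) (linkedParts G H v t) := by
  intro x hx s hs hxs
  obtain ⟨a, ha, b, hb, hab⟩ := (mem_linkedParts.mp hx).2
  exact mem_linkedParts.mpr ⟨hxs, a, ha, b,
    reachAvoiding_anti (before_mono (lt_of_mem_linkedParts hs).le) hb, hab⟩

end Parts

section PartOrder

variable {α : Type} {G : SimpleGraph α} {ℓ : ℕ} {H : Fin ℓ → Set α}

lemma partIdx_mem_backReach (hdec : IsDecomp H) {v x u : α} (p : G.Walk x u)
    (hp : ∀ w ∈ p.support, partIdx hdec u ≤ partIdx hdec w) {m : Fin ℓ}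
    (hum : partIdx hdec u ≤ m) (hx : x ∈ reachAvoiding G (before H m) v) :
    partIdx hdec u ∈ backReach (linkedParts G H v) p.length m := by
  induction p generalizing m with
  | nil =>
    have := notMem_of_mem_reachAvoiding hx
    rw [mem_before_iff hdec, not_lt] at this
    exact le_antisymm hum this ▸ self_mem_backReach _ _
  | @cons x y u hadj q ih =>
    have hq : ∀ w ∈ q.support, partIdx hdec u ≤ partIdx hdec w :=
      fun w hw => hp w (List.mem_cons_of_mem _ hw)
    rw [Walk.length_cons]
    by_cases hy : m ≤ partIdx hdec y
    · have hyR : y ∈ reachAvoiding G (before H m) v :=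
        mem_reachAvoiding_of_adj hx (by rwa [mem_before_iff hdec, not_lt]) hadj
      exact backReach_mono (Nat.le_succ _) m (ih hq hum hyR)
    · rw [not_le] at hy
      have hlinked : partIdx hdec y ∈ linkedParts G H v m :=
        mem_linkedParts.mpr ⟨hy, y, mem_partIdx hdec y, x, hx, hadj.symm⟩
      have hyR : y ∈ reachAvoiding G (before H (partIdx hdec y)) v :=
        mem_reachAvoiding_of_adj (reachAvoiding_anti (before_mono hy.le) hx)
          (by rw [mem_before_iff hdec]; exact lt_irrefl _) hadj
      exact backReach_subset_succ_of_mem _ hlinked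
        (ih hq (hp y (List.mem_cons_of_mem _ q.start_mem_support)) hyR)

/-- The set whose size `IsFlat` bounds. -/
def partBall (G : SimpleGraph α) (H : Fin ℓ → Set α) (i : Fin ℓ) (r : ℕ) (v : α) :
    Set α :=
  {u | u ∈ H i ∧ ∃ p : G.Walk v u, p.length ≤ r ∧ ∀ w ∈ p.support, w ∉ before H i}

noncomputable abbrev partOrder [Fintype α] (hdec : IsDecomp H) : LinearOrder α :=
  LinearOrder.lift' (fun v => toLex (partIdx hdec v, Fintype.equivFin α v))
    fun _ _ h => (Fintype.equivFin α).injective (congrArg (fun p => (ofLex p).2) h)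

lemma partIdx_le_of_le [Fintype α] (hdec : IsDecomp H) {u w : α}
    (h : (partOrder hdec).le u w) : partIdx hdec u ≤ partIdx hdec w := by
  rcases Prod.Lex.le_iff.mp h with h | ⟨h, -⟩
  exacts [h.le, h.le]

lemma wReach_partOrder_subset [Fintype α] (hdec : IsDecomp H) (r : ℕ) (v : α) :
    WReach G (partOrder hdec) r v ⊆
      ⋃ j ∈ backReach (linkedParts G H v) r (partIdx hdec v), partBall G H j r v := by
  rintro u ⟨p, -, hlen, hmin⟩
  have hidx : ∀ w ∈ p.support, partIdx hdec u ≤ partIdx hdec w :=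
    fun w hw => partIdx_le_of_le hdec (hmin w hw)
  have hv : v ∈ reachAvoiding G (before H (partIdx hdec v)) v :=
    mem_reachAvoiding_self (by rw [mem_before_iff hdec]; exact lt_irrefl _)
  refine Set.mem_iUnion₂.mpr ⟨partIdx hdec u, backReach_mono hlen _
    (partIdx_mem_backReach hdec p hidx (hidx v p.start_mem_support) hv), mem_partIdx hdec u,
    p, hlen, fun w hw => ?_⟩
  rw [mem_before_iff hdec, not_lt]
  exact hidx w hw

end PartOrder

theorem wcol_le_of_connected_flat_decomp_general (G : SimpleGraph V) (f : ℕ → ℕ) (k : ℕ)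
    {ℓ : ℕ} (H : Fin ℓ → Set V)
    (hdec : IsDecomp H)
    (hflat : IsFlat G H f) (hw : WidthLE G H k) (r : ℕ) :
    wcol G r ≤ (r + k).choose k * f r := by
  refine Nat.sInf_le ⟨partOrder hdec, fun v => ?_⟩
  set D := backReach (linkedParts G H v) r (partIdx hdec v)
  have hlt : ∀ t, ∀ s ∈ linkedParts G H v t, s < t := fun _ _ => lt_of_mem_linkedParts
  calc (WReach G (partOrder hdec) r v).ncard
      ≤ (⋃ j ∈ D, partBall G H j r v).ncard :=
        Set.ncard_le_ncard (wReach_partOrder_subset hdec r v) (Set.toFinite _)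
    _ ≤ ∑ j ∈ D, (partBall G H j r v).ncard := D.set_ncard_biUnion_le _
    _ ≤ ∑ _j ∈ D, f r := sum_le_sum fun j hj => hflat j r v <| by
        rw [mem_before_iff hdec, not_lt]
        exact le_of_mem_backReach hlt hj
    _ = #D * f r := by rw [sum_const, smul_eq_mul]
    _ ≤ (r + k).choose k * f r := Nat.mul_le_mul_right _
        (card_backReach_le hlt (isBackClique_linkedParts v) (card_linkedParts_le hw v) r _)

/-- **Lemma (connected flat decompositions bound wcol_r).** If `G` admits a
connected `f`-flat decomposition of width `k`, then
`wcol_r(G) ≤ C(r+k,k)·f(r)`. -/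
theorem wcol_le_of_connected_flat_decomp (G : SimpleGraph V) (f : ℕ → ℕ) (k : ℕ)
    {ℓ : ℕ} (H : Fin ℓ → Set V)
    (hdec : IsDecomp H) (hconn : IsConnectedDecomp G H)
    (hflat : IsFlat G H f) (hw : WidthLE G H k) (r : ℕ) :
    wcol G r ≤ (r + k).choose k * f r :=
  wcol_le_of_connected_flat_decomp_general G f k H hdec hflat hw r
end

section
/- Let t ≥ 4 and let G be a finite graph that excludes K_t as a minor. Then G admits a connected f-flat decomposition of width at most t−2, where f(r) = (t−3)(2r+1). -/
open SimpleGraph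

variable {V : Type} [Fintype V]

/-- `G` contains the complete graph `K_t` as a minor: `t` pairwise disjoint
nonempty connected subgraphs, pairwise joined by an edge. -/
def HasKtMinor (G : SimpleGraph V) (t : ℕ) : Prop :=
  ∃ B : Fin t → Set V, (∀ i, (B i).Nonempty) ∧ (∀ i, (G.induce (B i)).Connected) ∧
    (∀ i j, i ≠ j → Disjoint (B i) (B j)) ∧
    ∀ i j, i ≠ j → ∃ u ∈ B i, ∃ v ∈ B j, G.Adj u v

/-!
The parts are chosen greedily. Let `U` be the union of the parts chosen so far. We maintain that
for every component `C` of `G - U`, the earlier parts adjacent to `C` extend inside `U` to the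
branch sets of a clique minor. Adding `C` as one more branch set shows that at most `t - 2` parts
are adjacent to `C`, since `G` has no `K_t` minor; this bounds the width.

The next part lives in a component `C` of `G - U` adjacent to parts `B₁, …, Bₖ` with `k ≤ t - 2`:
pick `x ∈ C` adjacent to `B₁` and join it by shortest paths of `G - U` to neighbours of
`B₂, …, Bₖ`. A shortest path meets every `r`-ball of `G - U` in at most `2r + 1` vertices, so the
new part is `(t - 3)(2r + 1)`-flat. It is connected and adjacent to every `Bᵢ`, so it serves as its
own branch set and the invariant survives.
-/

theorem Set.ncard_le_of_forall_le_add {s : Set ℕ} {d : ℕ} (h : ∀ a ∈ s, ∀ b ∈ s, b ≤ a + d) :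
    s.ncard ≤ d + 1 := by
  rcases s.eq_empty_or_nonempty with rfl | hs
  · simp
  have hmin := Nat.sInf_mem hs
  calc s.ncard ≤ (Set.Icc (sInf s) (sInf s + d)).ncard :=
        Set.ncard_le_ncard (fun b hb => ⟨Nat.sInf_le hb, h _ hmin b hb⟩) (Set.finite_Icc _ _)
    _ = d + 1 := by rw [Set.ncard_Icc_nat]; omega

section

variable {α : Type} {G : SimpleGraph α}

theorem LinkedTo.mono {A A' C C' : Set α} (h : LinkedTo G A C) (hA : A ⊆ A') (hC : C ⊆ C') :
    LinkedTo G A' C' := by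
  obtain ⟨u, hu, v, hv, huv⟩ := h
  exact ⟨u, hA hu, v, hC hv, huv⟩

theorem LinkedTo.symm {A C : Set α} (h : LinkedTo G A C) : LinkedTo G C A := by
  obtain ⟨u, hu, v, hv, huv⟩ := h
  exact ⟨v, hv, u, hu, huv.symm⟩

theorem exists_walk_of_connected_induce {S : Set α} (h : (G.induce S).Connected) {x y : α}
    (hx : x ∈ S) (hy : y ∈ S) : ∃ p : G.Walk x y, ∀ w ∈ p.support, w ∈ S := by
  obtain ⟨p⟩ := h ⟨x, hx⟩ ⟨y, hy⟩
  have hmap : ∀ w ∈ (p.map (Embedding.induce S).toHom).support, w ∈ S := by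
    intro w hw
    rw [Walk.support_map, List.mem_map] at hw
    obtain ⟨w, -, rfl⟩ := hw
    exact w.2
  exact ⟨_, hmap⟩

theorem exists_isCompOf_mem {U : Set α} {v : α} (hv : v ∉ U) : ∃ C, IsCompOf G U C ∧ v ∈ C := by
  classical
  set C := {u | ∃ p : G.Walk v u, ∀ w ∈ p.support, w ∉ U}
  have hvC : v ∈ C := ⟨.nil, by simpa using hv⟩
  have hsupp : ∀ u (p : G.Walk v u), (∀ w ∈ p.support, w ∉ U) → ∀ w ∈ p.support, w ∈ C :=
    fun u p hp w hw =>
      ⟨p.takeUntil w hw, fun z hz => hp z (p.support_takeUntil_subset_support hw hz)⟩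
  refine ⟨C, ⟨⟨v, hvC⟩, Set.disjoint_left.mpr fun u ⟨p, hp⟩ => hp u p.end_mem_support, ?_, ?_⟩, hvC⟩
  · rw [connected_iff_exists_forall_reachable]
    exact ⟨⟨v, hvC⟩, fun ⟨u, p, hp⟩ => ⟨p.induce C (hsupp u p hp)⟩⟩
  · rintro u ⟨p, hp⟩ w hw hadj
    refine ⟨p.concat hadj, fun z hz => ?_⟩
    rw [Walk.support_concat, List.mem_append, List.mem_singleton] at hz
    rcases hz with hz | rfl
    exacts [hp z hz, hw]

theorem IsCompOf.mem_of_walk {U C : Set α} (hC : IsCompOf G U C) {x y : α} (hx : x ∈ C)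
    (p : G.Walk x y) (hp : ∀ w ∈ p.support, w ∉ U) : y ∈ C := by
  induction p with
  | nil => exact hx
  | cons hab q ih =>
    exact ih (hC.2.2.2 _ hx _ (hp _ (by simp)) hab) fun w hw => hp w (by simp [hw])

theorem IsCompOf.subset_of_mem {U C D : Set α} (hC : IsCompOf G U C) (hDU : Disjoint D U)
    (hD : (G.induce D).Connected) {w : α} (hwC : w ∈ C) (hwD : w ∈ D) : D ⊆ C := by
  intro y hy
  obtain ⟨p, hp⟩ := exists_walk_of_connected_induce hD hwD hy
  exact hC.mem_of_walk hwC p fun z hz => Set.disjoint_left.mp hDU (hp z hz)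

def ballIn (G : SimpleGraph α) (S : Set α) (v : α) (r : ℕ) : Set α :=
  {u | ∃ p : G.Walk v u, p.length ≤ r ∧ ∀ w ∈ p.support, w ∈ S}

theorem exists_isIsomPathIn_walk {S : Set α} {x y : α} (p : G.Walk x y)
    (hp : ∀ w ∈ p.support, w ∈ S) : ∃ q : G.Walk x y, IsIsomPathIn G S {w | w ∈ q.support} := by
  classical
  have hex : ∃ n, ∃ q : G.Walk x y, q.length = n ∧ ∀ w ∈ q.support, w ∈ S := ⟨_, p, rfl, hp⟩
  obtain ⟨q, hlen, hqS⟩ := Nat.find_spec hex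
  refine ⟨q.bypass, x, y, q.bypass, q.bypass_isPath,
    fun w hw => hqS w (q.support_bypass_subset_support hw), rfl, fun q' hq' => ?_⟩
  exact q.length_bypass_le_length.trans (hlen ▸ Nat.find_min' hex ⟨q', rfl, hq'⟩)

theorem isIsomPathIn_singleton {S : Set α} {x : α} (hx : x ∈ S) : IsIsomPathIn G S {x} :=
  ⟨x, x, .nil, .nil, by simpa using hx, by ext; simp, fun _ _ => Nat.zero_le _⟩

theorem IsIsomPathIn.subset {S P : Set α} (hP : IsIsomPathIn G S P) : P ⊆ S := by
  obtain ⟨x, y, p, -, hpS, rfl, -⟩ := hP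
  exact hpS

theorem IsIsomPathIn.connected {S P : Set α} (hP : IsIsomPathIn G S P) :
    (G.induce P).Connected := by
  obtain ⟨x, y, p, -, -, rfl, -⟩ := hP
  exact p.connected_induce_support

/-- Two vertices of a shortest path that are both within distance `r` of `v` are at most `2r`
apart along the path, otherwise the detour through `v` would be shorter. -/
theorem IsIsomPathIn.ncard_inter_ballIn_le {S P : Set α} (hP : IsIsomPathIn G S P) (v : α)
    (r : ℕ) : (P ∩ ballIn G S v r).ncard ≤ 2 * r + 1 := by
  obtain ⟨x, y, p, -, hpS, rfl, hmin⟩ := hP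
  set I := {n | n ≤ p.length ∧ p.getVert n ∈ ballIn G S v r}
  have hIfin : I.Finite := (Set.finite_Iic p.length).subset fun n hn => hn.1
  have hsub : {w | w ∈ p.support} ∩ ballIn G S v r ⊆ p.getVert '' I := by
    rintro u ⟨hu, hub⟩
    obtain ⟨n, rfl, hn⟩ := Walk.mem_support_iff_exists_getVert.mp hu
    exact ⟨n, ⟨hn, hub⟩, rfl⟩
  have hwidth : ∀ a ∈ I, ∀ b ∈ I, b ≤ a + 2 * r := by
    rintro a ⟨ha, qa, hqa, hqaS⟩ b ⟨hb, qb, hqb, hqbS⟩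
    have hdetour := hmin ((p.take a).append (qa.reverse.append (qb.append (p.drop b)))) (by
      intro w hw
      simp only [Walk.mem_support_append_iff, Walk.support_reverse, List.mem_reverse] at hw
      rcases hw with hw | hw | hw | hw
      · exact hpS w (List.take_subset _ _ (Walk.support_take p a ▸ hw))
      · exact hqaS w hw
      · exact hqbS w hw
      · exact hpS w (List.drop_subset _ _ (Walk.drop_support_eq_support_drop_min p b ▸ hw)))
    simp only [Walk.length_append, Walk.length_reverse, Walk.take_length, Walk.drop_length]
      at hdetour
    omega
  calc _ ≤ (p.getVert '' I).ncard := Set.ncard_le_ncard hsub (hIfin.image _)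
    _ ≤ I.ncard := Set.ncard_image_le hIfin
    _ ≤ 2 * r + 1 := Set.ncard_le_of_forall_le_add hwidth

def Spreads (G : SimpleGraph α) (U H : Set α) (f : ℕ → ℕ) : Prop :=
  ∀ r v, v ∉ U → (H ∩ ballIn G Uᶜ v r).ncard ≤ f r

theorem spreads_sUnion_of_isIsomPathIn {U : Set α} {𝓟 : Finset (Set α)}
    (h𝓟 : ∀ P ∈ 𝓟, IsIsomPathIn G Uᶜ P) :
    Spreads G U (⋃₀ ↑𝓟) (fun r => 𝓟.card * (2 * r + 1)) := by
  intro r v _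
  calc (⋃₀ ↑𝓟 ∩ ballIn G Uᶜ v r).ncard = (⋃ P ∈ 𝓟, P ∩ ballIn G Uᶜ v r).ncard := by
        rw [Set.sUnion_eq_biUnion, Set.iUnion₂_inter]; rfl
    _ ≤ ∑ P ∈ 𝓟, (P ∩ ballIn G Uᶜ v r).ncard := Finset.set_ncard_biUnion_le _ _
    _ ≤ ∑ _P ∈ 𝓟, (2 * r + 1) := Finset.sum_le_sum fun P hP =>
        (h𝓟 P hP).ncard_inter_ballIn_le v r
    _ = 𝓟.card * (2 * r + 1) := by rw [Finset.sum_const, smul_eq_mul]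

theorem IsCompOf.exists_isIsomPathIn_linked {U C B : Set α} (hC : IsCompOf G U C) {x : α}
    (hx : x ∈ C) (hB : LinkedTo G B C) :
    ∃ P ⊆ C, IsIsomPathIn G Uᶜ P ∧ x ∈ P ∧ LinkedTo G B P := by
  obtain ⟨b, hb, c, hc, hbc⟩ := hB
  obtain ⟨p, hp⟩ := exists_walk_of_connected_induce hC.2.2.1 hx hc
  obtain ⟨q, hq⟩ := exists_isIsomPathIn_walk (S := Uᶜ) p fun w hw =>
    Set.disjoint_left.mp hC.2.1 (hp w hw)
  refine ⟨_, hC.subset_of_mem (Set.subset_compl_iff_disjoint_right.mp hq.subset) hq.connected hx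
    q.start_mem_support, hq, q.start_mem_support, b, hb, c, q.end_mem_support, hbc⟩

/-- `x` is chosen next to one set of `𝓑`, which therefore needs no path of its own. -/
theorem IsCompOf.exists_isIsomPathIn_star [Finite α] {U C : Set α} (hC : IsCompOf G U C)
    {𝓑 : Set (Set α)} (hlink : ∀ B ∈ 𝓑, LinkedTo G B C) :
    ∃ x ∈ C, ∃ 𝓟 : Finset (Set α), 𝓟.Nonempty ∧ 𝓟.card ≤ max 1 (𝓑.ncard - 1) ∧
      (∀ P ∈ 𝓟, P ⊆ C ∧ IsIsomPathIn G Uᶜ P ∧ x ∈ P) ∧ ∀ B ∈ 𝓑, LinkedTo G B (⋃₀ ↑𝓟) := by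
  by_cases hsingle : ∃ x ∈ C, ∀ B ∈ 𝓑, LinkedTo G B {x}
  · obtain ⟨x, hx, hxlink⟩ := hsingle
    refine ⟨x, hx, {{x}}, Finset.singleton_nonempty _, by simp, ?_, by simpa using hxlink⟩
    simp only [Finset.mem_singleton, forall_eq, Set.singleton_subset_iff, Set.mem_singleton_iff,
      and_true]
    exact ⟨hx, isIsomPathIn_singleton (Set.disjoint_left.mp hC.2.1 hx)⟩
  push Not at hsingle
  obtain ⟨x₀, hx₀⟩ := hC.1
  obtain ⟨B₁, hB₁, -⟩ := hsingle x₀ hx₀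
  obtain ⟨b₁, hb₁, x, hx, hb₁x⟩ := hlink B₁ hB₁
  have hB₁x : LinkedTo G B₁ {x} := ⟨b₁, hb₁, x, rfl, hb₁x⟩
  obtain ⟨B₂, hB₂, hB₂x⟩ := hsingle x hx
  have hB₂' : B₂ ∈ 𝓑 \ {B₁} := ⟨hB₂, fun h => hB₂x (h ▸ hB₁x)⟩
  choose! P hPC hP hxP hBP using fun B (hB : B ∈ 𝓑 \ {B₁}) =>
    hC.exists_isIsomPathIn_linked hx (hlink B hB.1)
  set 𝓟 := (𝓑 \ {B₁}).toFinite.toFinset.image P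
  have hP𝓟 : ∀ B ∈ 𝓑 \ {B₁}, P B ⊆ ⋃₀ ↑𝓟 := fun B hB =>
    Set.subset_sUnion_of_mem (by simpa [𝓟] using ⟨B, hB, rfl⟩)
  refine ⟨x, hx, 𝓟, ⟨P B₂, by simpa [𝓟] using ⟨B₂, hB₂', rfl⟩⟩, ?_, ?_, fun B hB => ?_⟩
  · calc 𝓟.card ≤ (𝓑 \ {B₁}).toFinite.toFinset.card := Finset.card_image_le
      _ = 𝓑.ncard - 1 := by
        rw [← Set.ncard_eq_toFinset_card, Set.ncard_sdiff_singleton_of_mem hB₁]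
      _ ≤ _ := le_max_right _ _
  · simp only [𝓟, Finset.mem_image, Set.Finite.mem_toFinset, forall_exists_index, and_imp]
    rintro _ B hB rfl
    exact ⟨hPC B hB, hP B hB, hxP B hB⟩
  by_cases hBB₁ : B = B₁
  · subst hBB₁
    exact hB₁x.mono le_rfl (Set.singleton_subset_iff.mpr (hP𝓟 B₂ hB₂' (hxP B₂ hB₂')))
  · exact (hBP B ⟨hB, hBB₁⟩).mono le_rfl (hP𝓟 B ⟨hB, hBB₁⟩)

def ExtendsToClique (G : SimpleGraph α) (U : Set α) (𝓑 : Set (Set α)) : Prop :=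
  ∃ M : Set α → Set α, (∀ B ∈ 𝓑, B ⊆ M B ∧ M B ⊆ U ∧ (G.induce (M B)).Connected) ∧
    ∀ B ∈ 𝓑, ∀ B' ∈ 𝓑, B ≠ B' → Disjoint (M B) (M B') ∧ LinkedTo G (M B) (M B')

namespace ExtendsToClique

variable {U : Set α} {𝓑 : Set (Set α)}

theorem empty : ExtendsToClique G U ∅ :=
  ⟨id, by simp, by simp⟩

theorem mono (h : ExtendsToClique G U 𝓑) {U' : Set α} {𝓑' : Set (Set α)} (hU : U ⊆ U')
    (h𝓑 : 𝓑' ⊆ 𝓑) : ExtendsToClique G U' 𝓑' := by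
  obtain ⟨M, hM, hMM⟩ := h
  refine ⟨M, fun B hB => ?_, fun B hB B' hB' => hMM B (h𝓑 hB) B' (h𝓑 hB')⟩
  obtain ⟨hBM, hMU, hMconn⟩ := hM B (h𝓑 hB)
  exact ⟨hBM, hMU.trans hU, hMconn⟩

theorem notMem_of_disjoint (h : ExtendsToClique G U 𝓑) {H : Set α} (hH : H.Nonempty)
    (hHU : Disjoint H U) : H ∉ 𝓑 := by
  obtain ⟨M, hM, -⟩ := h
  intro hH𝓑
  obtain ⟨x, hx⟩ := hH
  exact Set.disjoint_left.mp hHU hx ((hM H hH𝓑).2.1 ((hM H hH𝓑).1 hx))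

/-- A connected set outside `U` touching every set of `𝓑` is its own branch set. -/
theorem insert (h : ExtendsToClique G U 𝓑) {H : Set α} (hH : H.Nonempty) (hHU : Disjoint H U)
    (hHconn : (G.induce H).Connected) (hlink : ∀ B ∈ 𝓑, LinkedTo G B H) :
    ExtendsToClique G (U ∪ H) (insert H 𝓑) := by
  have hH𝓑 := h.notMem_of_disjoint hH hHU
  obtain ⟨M, hM, hMM⟩ := h
  have hMH : ∀ B ∈ 𝓑, Function.update M H H B = M B := fun B hB =>
    Function.update_of_ne (ne_of_mem_of_not_mem hB hH𝓑) _ _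
  have hnew : ∀ B ∈ 𝓑, Disjoint (M B) H ∧ LinkedTo G (M B) H := fun B hB =>
    ⟨hHU.symm.mono_left (hM B hB).2.1, (hlink B hB).mono (hM B hB).1 le_rfl⟩
  refine ⟨Function.update M H H, ?_, ?_⟩
  · rintro B (rfl | hB)
    · rw [Function.update_self]
      exact ⟨le_rfl, Set.subset_union_right, hHconn⟩
    · rw [hMH B hB]
      obtain ⟨hBM, hMU, hMconn⟩ := hM B hB
      exact ⟨hBM, hMU.trans Set.subset_union_left, hMconn⟩
  · rintro B (rfl | hB) B' (rfl | hB') hBB'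
    · exact absurd rfl hBB'
    · rw [Function.update_self, hMH B' hB']
      exact ⟨(hnew B' hB').1.symm, (hnew B' hB').2.symm⟩
    · rw [Function.update_self, hMH B hB]
      exact hnew B hB
    · rw [hMH B hB, hMH B' hB']
      exact hMM B hB B' hB' hBB'

theorem hasKtMinor [Finite α] (h : ExtendsToClique G U 𝓑) (hne : ∀ B ∈ 𝓑, B.Nonempty) {t : ℕ}
    (ht : t ≤ 𝓑.ncard) : HasKtMinor G t := by
  obtain ⟨M, hM, hMM⟩ := h
  let e : Fin t ↪ 𝓑 := (Fin.castLEEmb (ht.trans (Nat.card_coe_set_eq 𝓑).ge)).trans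
    (Finite.equivFin 𝓑).symm.toEmbedding
  have hne' : ∀ i j, i ≠ j → (e i : Set α) ≠ e j := fun i j hij h =>
    hij (e.injective (Subtype.ext h))
  refine ⟨fun i => M (e i), fun i => (hne _ (e i).2).mono (hM _ (e i).2).1,
    fun i => (hM _ (e i).2).2.2, fun i j hij => ?_, fun i j hij => ?_⟩
  · exact (hMM _ (e i).2 _ (e j).2 (hne' i j hij)).1
  · exact (hMM _ (e i).2 _ (e j).2 (hne' i j hij)).2

/-- Together with `C` the branch sets form a clique minor on `𝓑.ncard + 1` vertices. -/
theorem ncard_le_sub_two [Finite α] (h : ExtendsToClique G U 𝓑) (hne : ∀ B ∈ 𝓑, B.Nonempty)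
    {C : Set α} (hC : C.Nonempty) (hCU : Disjoint C U) (hCconn : (G.induce C).Connected)
    (hlink : ∀ B ∈ 𝓑, LinkedTo G B C) {t : ℕ} (hG : ¬HasKtMinor G t) : 𝓑.ncard ≤ t - 2 := by
  by_contra! hlt
  refine hG ((h.insert hC hCU hCconn hlink).hasKtMinor
    (Set.forall_mem_insert.mpr ⟨hC, hne⟩) ?_)
  rw [Set.ncard_insert_of_notMem (h.notMem_of_disjoint hC hCU)]
  omega

end ExtendsToClique

theorem biUnion_append_singleton (L : List (Set α)) (H : Set α) :
    ⋃ B ∈ L ++ [H], B = (⋃ B ∈ L, B) ∪ H := by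
  ext v
  simp [or_and_right, exists_or]

def LinkedPartsExtendToClique (G : SimpleGraph α) (L : List (Set α)) : Prop :=
  ∀ C, IsCompOf G (⋃ B ∈ L, B) C →
    ExtendsToClique G (⋃ B ∈ L, B) {B | B ∈ L ∧ LinkedTo G B C}

theorem LinkedPartsExtendToClique.ncard_le [Finite α] {L : List (Set α)}
    (h : LinkedPartsExtendToClique G L) (hne : ∀ B ∈ L, B.Nonempty) {t : ℕ}
    (hG : ¬HasKtMinor G t) {C : Set α} (hC : IsCompOf G (⋃ B ∈ L, B) C) :
    {B | B ∈ L ∧ LinkedTo G B C}.ncard ≤ t - 2 :=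
  (h C hC).ncard_le_sub_two (fun B hB => hne B hB.1) hC.1 hC.2.1 hC.2.2.1 (fun _ hB => hB.2) hG

theorem LinkedPartsExtendToClique.append {L : List (Set α)} (h : LinkedPartsExtendToClique G L)
    {C H : Set α} (hC : IsCompOf G (⋃ B ∈ L, B) C) (hHC : H ⊆ C) (hH : H.Nonempty)
    (hHconn : (G.induce H).Connected) (hlink : ∀ B ∈ L, LinkedTo G B C → LinkedTo G B H) :
    LinkedPartsExtendToClique G (L ++ [H]) := by
  set U := ⋃ B ∈ L, B
  have hHU : Disjoint H U := hC.2.1.mono_left hHC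
  intro C' hC'
  rw [biUnion_append_singleton] at hC' ⊢
  obtain ⟨v, hv⟩ := hC'.1
  have hC'U : Disjoint C' U := hC'.2.1.mono_right Set.subset_union_left
  by_cases hvC : v ∈ C
  · have hC'C : C' ⊆ C := hC.subset_of_mem hC'U hC'.2.2.1 hvC hv
    refine ((h C hC).insert hH hHU hHconn fun B hB => hlink B hB.1 hB.2).mono le_rfl ?_
    rintro B ⟨hB, hBC'⟩
    rcases List.mem_append.mp hB with hB | hB
    · exact Or.inr ⟨hB, hBC'.mono le_rfl hC'C⟩
    · exact Or.inl (List.mem_singleton.mp hB)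
  · obtain ⟨D, hD, hvD⟩ := exists_isCompOf_mem (G := G) (Set.disjoint_left.mp hC'U hv)
    have hC'D : C' ⊆ D := hD.subset_of_mem hC'U hC'.2.2.1 hvD hv
    -- a neighbour of `H ⊆ C` outside `U` lies in `C`, which `C'` avoids
    have hHC' : ¬LinkedTo G H C' := by
      rintro ⟨u, hu, w, hw, huw⟩
      have hwC : w ∈ C := hC.2.2.2 u (hHC hu) w (Set.disjoint_left.mp hC'U hw) huw
      exact hvC (hC.subset_of_mem hC'U hC'.2.2.1 hwC hw hv)
    refine (h D hD).mono Set.subset_union_left ?_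
    rintro B ⟨hB, hBC'⟩
    rcases List.mem_append.mp hB with hB | hB
    · exact ⟨hB, hBC'.mono le_rfl hC'D⟩
    · exact absurd (List.mem_singleton.mp hB ▸ hBC') hHC'

theorem before_getElem_eq (L : List (Set α)) (i : Fin L.length) :
    before (fun j : Fin L.length => L[j]) i = ⋃ B ∈ L.take i, B := by
  ext v
  simp only [before, Set.mem_iUnion, exists_prop, List.mem_take_iff_getElem]
  constructor
  · rintro ⟨j, hji, hv⟩
    exact ⟨_, ⟨j, by simp [hji], rfl⟩, hv⟩
  · rintro ⟨_, ⟨j, hj, rfl⟩, hv⟩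
    exact ⟨⟨j, (lt_min_iff.mp hj).2⟩, Fin.lt_def.mpr (lt_min_iff.mp hj).1, hv⟩

structure IsPartialDecomp (G : SimpleGraph α) (f : ℕ → ℕ) (L : List (Set α)) : Prop where
  nonempty : ∀ B ∈ L, B.Nonempty
  pairwise_disjoint : L.Pairwise Disjoint
  connected : ∀ B ∈ L, (G.induce B).Connected
  spreads : ∀ (i : ℕ) (hi : i < L.length), Spreads G (⋃ B ∈ L.take i, B) L[i] f
  linkedPartsExtendToClique : ∀ i, LinkedPartsExtendToClique G (L.take i)

namespace IsPartialDecomp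

variable {f : ℕ → ℕ} {L : List (Set α)}

theorem nil : IsPartialDecomp G f [] :=
  ⟨by simp, .nil, by simp, by simp, fun _ _ _ => by simpa using ExtendsToClique.empty⟩

theorem append (hL : IsPartialDecomp G f L) {H : Set α} (hH : H.Nonempty)
    (hHU : Disjoint H (⋃ B ∈ L, B)) (hHconn : (G.induce H).Connected)
    (hHs : Spreads G (⋃ B ∈ L, B) H f) (hext : LinkedPartsExtendToClique G (L ++ [H])) :
    IsPartialDecomp G f (L ++ [H]) := by
  refine ⟨?_, ?_, ?_, fun i hi => ?_, fun i => ?_⟩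
  · simpa [or_imp, forall_and] using ⟨hL.nonempty, hH⟩
  · refine List.pairwise_append.mpr ⟨hL.pairwise_disjoint, List.pairwise_singleton _ _, ?_⟩
    simp only [List.mem_singleton, forall_eq]
    exact fun B hB => (hHU.mono_right (Set.subset_iUnion₂_of_subset B hB le_rfl)).symm
  · simpa [or_imp, forall_and] using ⟨hL.connected, hHconn⟩
  · rcases (Nat.lt_succ_iff.mp (by simpa using hi)).lt_or_eq with hi | rfl
    · rw [List.getElem_append_left hi, List.take_append_of_le_length hi.le]
      exact hL.spreads i hi
    · simpa using hHs
  · rcases le_or_gt i L.length with hi | hi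
    · rw [List.take_append_of_le_length hi]
      exact hL.linkedPartsExtendToClique i
    · rwa [List.take_of_length_le (by simpa using hi)]

theorem linkedPartsExtendToClique_self (hL : IsPartialDecomp G f L) :
    LinkedPartsExtendToClique G L := by
  simpa using hL.linkedPartsExtendToClique L.length

theorem isDecomp (hL : IsPartialDecomp G f L) (hcover : ⋃ B ∈ L, B = Set.univ) :
    IsDecomp (fun i : Fin L.length => L[i]) := by
  refine ⟨fun i => hL.nonempty _ (List.getElem_mem _), fun i j hij => ?_, fun v => ?_⟩
  · rcases Fin.lt_or_lt_of_ne hij with h | h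
    · exact List.pairwise_iff_getElem.mp hL.pairwise_disjoint i j i.2 j.2 h
    · exact (List.pairwise_iff_getElem.mp hL.pairwise_disjoint j i j.2 i.2 h).symm
  · obtain ⟨B, hB, hv⟩ := Set.mem_iUnion₂.mp (hcover ▸ Set.mem_univ v)
    obtain ⟨j, hj, rfl⟩ := List.mem_iff_getElem.mp hB
    exact ⟨⟨j, hj⟩, hv⟩

theorem isConnectedDecomp (hL : IsPartialDecomp G f L) :
    IsConnectedDecomp G (fun i : Fin L.length => L[i]) :=
  fun _ => hL.connected _ (List.getElem_mem _)

theorem isFlat (hL : IsPartialDecomp G f L) : IsFlat G (fun i : Fin L.length => L[i]) f := by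
  intro i
  rw [before_getElem_eq]
  exact hL.spreads i i.2

theorem widthLE [Finite α] (hL : IsPartialDecomp G f L) {t : ℕ} (hG : ¬HasKtMinor G t) :
    WidthLE G (fun i : Fin L.length => L[i]) (t - 2) := by
  intro i C hC
  rw [before_getElem_eq] at hC
  have hnodup : L.Nodup := hL.pairwise_disjoint.imp_of_mem fun hB _ hdisj hBB' => by
    subst hBB'
    exact (hL.nonempty _ hB).ne_empty (disjoint_self.mp hdisj)
  refine (Set.ncard_le_ncard_of_injOn (fun j : Fin L.length => L[j]) ?_ ?_).trans
    ((hL.linkedPartsExtendToClique i).ncard_le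
      (fun B hB => hL.nonempty B (List.mem_of_mem_take hB)) hG hC)
  · rintro j ⟨hji, hjC⟩
    refine ⟨List.mem_take_iff_getElem.mpr ⟨j, lt_min hji j.2, rfl⟩, hjC⟩
  · exact fun j _ k _ hjk => Fin.ext (hnodup.getElem_inj_iff.mp hjk)

theorem exists_append [Finite α] {t : ℕ} (ht : 4 ≤ t) (hG : ¬HasKtMinor G t)
    (hL : IsPartialDecomp G (fun r => (t - 3) * (2 * r + 1)) L) {v : α}
    (hv : v ∉ ⋃ B ∈ L, B) : ∃ H : Set α, H.Nonempty ∧ Disjoint H (⋃ B ∈ L, B) ∧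
      IsPartialDecomp G (fun r => (t - 3) * (2 * r + 1)) (L ++ [H]) := by
  obtain ⟨C, hC, -⟩ := exists_isCompOf_mem (G := G) hv
  have hext := hL.linkedPartsExtendToClique_self
  have hcard := hext.ncard_le hL.nonempty hG hC
  obtain ⟨x, -, 𝓟, h𝓟ne, h𝓟card, h𝓟, hlink⟩ :=
    hC.exists_isIsomPathIn_star (𝓑 := {B | B ∈ L ∧ LinkedTo G B C}) fun B hB => hB.2
  have hHC : ⋃₀ ↑𝓟 ⊆ C := Set.sUnion_subset fun P hP => (h𝓟 P hP).1
  have hHU : Disjoint (⋃₀ ↑𝓟) (⋃ B ∈ L, B) := hC.2.1.mono_left hHC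
  have hHne : (⋃₀ (𝓟 : Set (Set α))).Nonempty := by
    obtain ⟨P, hP⟩ := h𝓟ne
    exact ⟨x, Set.mem_sUnion_of_mem (h𝓟 P hP).2.2 hP⟩
  have hHconn : (G.induce (⋃₀ ↑𝓟)).Connected :=
    induce_sUnion_connected_of_pairwise_not_disjoint (Finset.coe_nonempty.mpr h𝓟ne)
      (fun hP hQ => ⟨x, (h𝓟 _ hP).2.2, (h𝓟 _ hQ).2.2⟩) fun hP => (h𝓟 _ hP).2.1.connected
  have hHs : Spreads G (⋃ B ∈ L, B) (⋃₀ ↑𝓟) (fun r => (t - 3) * (2 * r + 1)) := fun r w hw =>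
    ((spreads_sUnion_of_isIsomPathIn fun P hP => (h𝓟 P hP).2.1) r w hw).trans
      (Nat.mul_le_mul_right _ (by omega))
  exact ⟨_, hHne, hHU, hL.append hHne hHU hHconn hHs
    (hext.append hC hHC hHne hHconn fun B hB hBC => hlink B ⟨hB, hBC⟩)⟩

end IsPartialDecomp

theorem exists_isPartialDecomp_cover [Finite α] {f : ℕ → ℕ}
    (hstep : ∀ L : List (Set α), IsPartialDecomp G f L → ∀ v ∉ ⋃ B ∈ L, B,
      ∃ H : Set α, H.Nonempty ∧ Disjoint H (⋃ B ∈ L, B) ∧ IsPartialDecomp G f (L ++ [H])) :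
    ∃ L : List (Set α), IsPartialDecomp G f L ∧ ⋃ B ∈ L, B = Set.univ := by
  suffices h : ∀ L, IsPartialDecomp G f L →
      ∃ L' : List (Set α), IsPartialDecomp G f L' ∧ ⋃ B ∈ L', B = Set.univ from
    h [] IsPartialDecomp.nil
  intro L hL
  induction hn : (⋃ B ∈ L, B)ᶜ.ncard using Nat.strong_induction_on generalizing L with
  | _ n ih =>
    by_cases hcover : ⋃ B ∈ L, B = Set.univ
    · exact ⟨L, hL, hcover⟩
    obtain ⟨v, hv⟩ := Set.nonempty_compl.mpr hcover
    obtain ⟨H, ⟨x, hx⟩, hHU, hL'⟩ := hstep L hL v hv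
    refine ih _ ?_ _ hL' rfl
    rw [← hn, biUnion_append_singleton, Set.compl_union]
    exact Set.ncard_lt_ncard (Set.inter_ssubset_left_iff.mpr fun h =>
      h (Set.disjoint_left.mp hHU hx) hx)

end

/-- **Lemma (decomposition for K_t-minor-free graphs).** If `t ≥ 4` and `G`
excludes `K_t` as a minor, then `G` admits a connected `f`-flat decomposition
of width at most `t−2`, where `f(r) = (t−3)(2r+1)`. -/
theorem exists_connected_flat_decomp (t : ℕ) (ht : 4 ≤ t)
    (G : SimpleGraph V) (hG : ¬ HasKtMinor G t) :
    ∃ (ℓ : ℕ) (H : Fin ℓ → Set V), IsDecomp H ∧ IsConnectedDecomp G H ∧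
      IsFlat G H (fun r => (t - 3) * (2 * r + 1)) ∧ WidthLE G H (t - 2) := by
  obtain ⟨L, hL, hcover⟩ :=
    exists_isPartialDecomp_cover fun L hL v hv => hL.exists_append ht hG hv
  exact ⟨L.length, fun i => L[i], hL.isDecomp hcover, hL.isConnectedDecomp, hL.isFlat,
    hL.widthLE hG⟩
end
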